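/- arXiv:1707.08249 — 4 statements merged into one kernel-verified Lean document; each statement's English description precedes it below -/
import Mathlib

section
/- The Demazure operators satisfy the braid relation ∂_i ∂_{i+1} ∂_i = ∂_{i+1} ∂_i ∂_{i+1} as operators on R = k[x_1,...,x_n]. -/
/-!
Multiplied by the Vandermonde product `Δ = (x_b - x_a)(x_c - x_b)(x_c - x_a)`, the word
`∂_{ab} ∂_{bc} ∂_{ab} f` becomes the alternating sum `∑_{w ∈ S₃} sgn(w) w(f)` over the permutations
of `x_a, x_b, x_c`; this uses that `∂_{ab} f` is symmetric in `x_a, x_b`. Reversing `(a, b, c)`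
turns this word into `-∂_{bc} ∂_{ab} ∂_{bc} f` and `Δ` into `-Δ` while fixing the alternating sum,
so both words have the same product with `Δ`. Each `x_i - x_j` is a non-zero-divisor, so `Δ`
cancels.
-/

open MvPolynomial

variable {k : Type*} [CommRing k] {n : ℕ}

noncomputable def collapse (a b : Fin n) :
    MvPolynomial (Fin n) k →ₐ[k] MvPolynomial (Fin n) k :=
  aeval (fun m => if m = b then X a else X m)

theorem eval_aux (a b : Fin n) (f : MvPolynomial (Fin n) k) :
    (X b - X a : MvPolynomial (Fin n) k) ∣ f - collapse a b f := by
  classical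
  let g : Fin n → Polynomial (MvPolynomial (Fin n) k) :=
    fun m => if m = b then Polynomial.X else Polynomial.C (X m)
  let q : Polynomial (MvPolynomial (Fin n) k) := aeval g f
  have key : ∀ c : MvPolynomial (Fin n) k, Polynomial.eval c q =
      aeval (fun m => if m = b then c else X m) f := by
    intro c
    have h1 := congrArg (fun ψ : MvPolynomial (Fin n) k →ₐ[k] MvPolynomial (Fin n) k => ψ f)
      (comp_aeval (f := g)
        ((Polynomial.aeval c : Polynomial (MvPolynomial (Fin n) k)
            →ₐ[MvPolynomial (Fin n) k] MvPolynomial (Fin n) k).restrictScalars k))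
    simp only [AlgHom.coe_comp, Function.comp_apply, AlgHom.coe_restrictScalars'] at h1
    have h2 : (fun m => (Polynomial.aeval c (g m) : MvPolynomial (Fin n) k))
        = fun m => if m = b then c else X m := by
      funext m
      by_cases h : m = b <;> simp [g, h]
    have h3 : Polynomial.eval c q = Polynomial.aeval c (aeval g f) := by
      rw [Polynomial.coe_aeval_eq_eval]
    rw [h3]
    rw [h1, h2]
  have h1 : Polynomial.eval (X b : MvPolynomial (Fin n) k) q = f := by
    rw [key]
    have : (fun m => if m = b then (X b : MvPolynomial (Fin n) k) else X m) = X := by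
      funext m; by_cases h : m = b <;> simp [h]
    rw [this, aeval_X_left_apply]
  have h2 : Polynomial.eval (X a : MvPolynomial (Fin n) k) q = collapse a b f := by
    rw [key]; rfl
  calc (X b - X a : MvPolynomial (Fin n) k) ∣ q.eval (X b) - q.eval (X a) :=
        Polynomial.sub_dvd_eval_sub _ _ q
    _ = f - collapse a b f := by rw [h1, h2]

theorem collapse_rename (a b : Fin n) (f : MvPolynomial (Fin n) k) :
    collapse a b (rename (Equiv.swap a b) f) = collapse a b f := by
  classical
  have hfun : ((fun m => if m = b then (X a : MvPolynomial (Fin n) k) else X m)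
      ∘ (Equiv.swap a b)) = fun m => if m = b then X a else X m := by
    funext m
    rcases eq_or_ne m a with rfl | hma
    · by_cases h : m = b
      · subst h; simp
      · simp [Function.comp, Equiv.swap_apply_left, h]
    · rcases eq_or_ne m b with rfl | hmb
      · simp [Function.comp, Equiv.swap_apply_right, hma.symm]
      · simp [Function.comp, Equiv.swap_apply_of_ne_of_ne hma hmb, hmb]
  rw [collapse, aeval_rename, hfun]

theorem demazure_dvd (a b : Fin n) (f : MvPolynomial (Fin n) k) :
    (X b - X a : MvPolynomial (Fin n) k) ∣ f - rename (Equiv.swap a b) f := by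
  have h1 := eval_aux a b f
  have h2 := eval_aux a b (rename (Equiv.swap a b) f)
  rw [collapse_rename] at h2
  have h3 : f - rename (Equiv.swap a b) f =
      (f - collapse a b f) - (rename (Equiv.swap a b) f - collapse a b f) := by ring
  rw [h3]
  exact dvd_sub h1 h2

/-- `demazure a b f = (f - s f) / (x_b - x_a)`, where `s` swaps `x_a` and `x_b`. The paper's `∂_i`
is `demazure (i - 1) i`, since `Fin n` indexes `x_1, …, x_n` from `0`. -/
noncomputable def demazure (a b : Fin n) (f : MvPolynomial (Fin n) k) :
    MvPolynomial (Fin n) k :=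
  (demazure_dvd a b f).choose

theorem demazure_spec (a b : Fin n) (f : MvPolynomial (Fin n) k) :
    f - rename (Equiv.swap a b) f = (X b - X a) * demazure a b f :=
  (demazure_dvd a b f).choose_spec

theorem MvPolynomial.isRegular_X_sub_X {σ R : Type*} [CommRing R] [DecidableEq σ] {i j : σ}
    (hij : i ≠ j) : IsRegular (X i - X j : MvPolynomial σ R) := by
  -- The shear `X i ↦ X i + X j` is invertible and sends `X i - X j` to the regular `X i`.
  let shear : R → MvPolynomial σ R →ₐ[R] MvPolynomial σ R :=
    fun t => aeval (Function.update X i (X i + C t * X j))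
  have shear_X_sub_X : shear 1 (X i - X j) = X i := by
    simp [shear, Function.update_of_ne hij.symm]
  have shear_comp : (shear (-1)).comp (shear 1) = AlgHom.id R _ := by
    refine algHom_ext fun m => ?_
    by_cases hm : m = i
    · subst hm; simp [shear, Function.update_of_ne hij.symm]
    · simp [shear, hm]
  have shear_inv : Function.LeftInverse (shear (-1)) (shear 1) :=
    AlgHom.congr_fun shear_comp
  rw [← isLeftRegular_iff_isRegular]
  intro p q hpq
  apply shear_inv.injective
  apply (isRegular_X (n := i)).left
  simpa [shear_X_sub_X] using congrArg (shear 1) hpq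

open Equiv

section Demazure

variable {a b c : Fin n}

theorem demazure_eq_of_sub_eq_mul (hab : a ≠ b) {f g : MvPolynomial (Fin n) k}
    (h : f - rename (swap a b) f = (X b - X a) * g) : demazure a b f = g :=
  (isRegular_X_sub_X hab.symm).left ((demazure_spec a b f).symm.trans h)

theorem demazure_neg (hab : a ≠ b) (f : MvPolynomial (Fin n) k) :
    demazure a b (-f) = -demazure a b f :=
  demazure_eq_of_sub_eq_mul hab <| by
    rw [map_neg]; linear_combination -demazure_spec a b f

theorem demazure_comm (hab : a ≠ b) (f : MvPolynomial (Fin n) k) :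
    demazure b a f = -demazure a b f :=
  demazure_eq_of_sub_eq_mul hab.symm <| by
    rw [swap_comm]; linear_combination demazure_spec a b f

theorem rename_sub_rename_swap (σ : Fin n → Fin n) (a b : Fin n) (f : MvPolynomial (Fin n) k) :
    rename σ f - rename σ (rename (swap a b) f) =
      (X (σ b) - X (σ a)) * rename σ (demazure a b f) := by
  simpa using congrArg (rename σ) (demazure_spec a b f)

theorem rename_swap_demazure (hab : a ≠ b) (f : MvPolynomial (Fin n) k) :
    rename (swap a b) (demazure a b f) = demazure a b f := by
  refine ((isRegular_X_sub_X hab).left ?_).symm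
  have h := rename_sub_rename_swap (swap a b) a b f
  rw [rename_rename, ← Perm.coe_mul, swap_mul_self, Perm.coe_one, rename_id_apply,
    swap_apply_left, swap_apply_right] at h
  linear_combination h + demazure_spec a b f

/-- The alternating sum `∑_{w ∈ S₃} sgn(w) w(f)` over the permutations of `x_a, x_b, x_c`. -/
noncomputable def antisymmetrization (a b c : Fin n) (f : MvPolynomial (Fin n) k) :
    MvPolynomial (Fin n) k :=
  f - rename (swap a b) f - rename (swap b c) f + rename (swap a b) (rename (swap b c) f) +
    rename (swap b c) (rename (swap a b) f) - rename (swap a c) f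

theorem antisymmetrization_reverse (a b c : Fin n) (f : MvPolynomial (Fin n) k) :
    antisymmetrization c b a f = antisymmetrization a b c f := by
  rw [antisymmetrization, antisymmetrization, swap_comm c b, swap_comm b a, swap_comm c a]
  ring

theorem rename_swap_rename_swap_rename_swap (hbc : b ≠ c) (hac : a ≠ c)
    (f : MvPolynomial (Fin n) k) :
    rename (swap a b) (rename (swap b c) (rename (swap a b) f)) = rename (swap a c) f := by
  have h : swap b a * swap c b * swap b a = swap a c := swap_mul_swap_mul_swap hbc.symm hac.symm
  rw [swap_comm b a, swap_comm c b] at h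
  rw [rename_rename, rename_rename, ← h]
  rfl

theorem vandermonde_mul_demazure_demazure_demazure (hab : a ≠ b) (hbc : b ≠ c) (hac : a ≠ c)
    (f : MvPolynomial (Fin n) k) :
    (X b - X a) * (X c - X b) * (X c - X a) * demazure a b (demazure b c (demazure a b f)) =
      antisymmetrization a b c f := by
  set u := demazure a b f
  set v := demazure b c u
  have hu := demazure_spec a b f
  have hv := demazure_spec b c u
  have hw := demazure_spec a b v
  have hv' := rename_sub_rename_swap (swap a b) b c u
  have hu₁ := rename_sub_rename_swap (swap b c) a b f
  have hu₂ := congrArg (rename (swap a b)) (rename_sub_rename_swap (swap b c) a b f)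
  rw [swap_apply_right, swap_apply_of_ne_of_ne hac.symm hbc.symm,
    rename_swap_demazure hab] at hv'
  rw [swap_apply_left, swap_apply_of_ne_of_ne hab hac] at hu₁ hu₂
  simp only [map_sub, map_mul, rename_X, swap_apply_left,
    swap_apply_of_ne_of_ne hac.symm hbc.symm] at hu₂
  rw [rename_swap_rename_swap_rename_swap hbc hac] at hu₂
  unfold antisymmetrization
  linear_combination -(X c - X b) * (X c - X a) * hw - (X c - X a) * hv + (X c - X b) * hv' - hu
    + hu₁ - hu₂

theorem demazure_braid_of_ne (hab : a ≠ b) (hbc : b ≠ c) (hac : a ≠ c)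
    (f : MvPolynomial (Fin n) k) :
    demazure a b (demazure b c (demazure a b f)) = demazure b c (demazure a b (demazure b c f)) := by
  have hreg : IsRegular ((X b - X a) * (X c - X b) * (X c - X a) : MvPolynomial (Fin n) k) :=
    ((isRegular_X_sub_X hab.symm).mul (isRegular_X_sub_X hbc.symm)).mul
      (isRegular_X_sub_X hac.symm)
  apply hreg.left
  dsimp only
  have h := vandermonde_mul_demazure_demazure_demazure hbc.symm hab.symm hac.symm f
  simp only [antisymmetrization_reverse, demazure_comm hab, demazure_comm hbc, demazure_neg hab,
    demazure_neg hbc] at h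
  rw [vandermonde_mul_demazure_demazure_demazure hab hbc hac, ← h]
  ring

end Demazure

/-- The Demazure operators satisfy the braid relation
`∂_i ∂_{i+1} ∂_i = ∂_{i+1} ∂_i ∂_{i+1}` on `R = k[x_1, …, x_n]`. -/
theorem demazure_braid {k : Type*} [CommRing k] {n : ℕ} (i : ℕ) (hi : i + 2 < n)
    (f : MvPolynomial (Fin n) k) :
    demazure (⟨i, by omega⟩ : Fin n) ⟨i + 1, by omega⟩
      (demazure (⟨i + 1, by omega⟩ : Fin n) ⟨i + 2, hi⟩
        (demazure (⟨i, by omega⟩ : Fin n) ⟨i + 1, by omega⟩ f)) =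
    demazure (⟨i + 1, by omega⟩ : Fin n) ⟨i + 2, hi⟩
      (demazure (⟨i, by omega⟩ : Fin n) ⟨i + 1, by omega⟩
        (demazure (⟨i + 1, by omega⟩ : Fin n) ⟨i + 2, hi⟩ f)) :=
  demazure_braid_of_ne (by simp) (by simp) (by simp) f
end

section
/- In R = ℚ[x_1,...,x_5] with α_i = x_{i+1}-x_i, one has ∂_1∂_2∂_3(α_4 · ∂_3(α_4² · ∂_3(α_4² · ∂_1∂_2∂_3(α_4² · ∂_2∂_3(α_4² · ∂_3(α_4²)))))) = -2, where the result is a constant polynomial. -/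
open MvPolynomial

variable {k : Type*} [CommRing k] {n : ℕ}

lemma demazure_eq (a b : Fin 5) (h : a ≠ b) (f g : MvPolynomial (Fin 5) ℚ)
    (hfg : f - rename (Equiv.swap a b) f = (X b - X a) * g) :
    demazure a b f = g := by
  have hs := demazure_spec a b f
  rw [hfg] at hs
  have hX : (X b - X a : MvPolynomial (Fin 5) ℚ) ≠ 0 := by
    rw [sub_ne_zero]
    exact fun hc => h (X_injective hc).symm
  exact mul_left_cancel₀ hX hs.symm

lemma sw01_0 : Equiv.swap (0:Fin 5) 1 0 = 1 := by decide
lemma sw01_1 : Equiv.swap (0:Fin 5) 1 1 = 0 := by decide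
lemma sw01_2 : Equiv.swap (0:Fin 5) 1 2 = 2 := by decide
lemma sw01_3 : Equiv.swap (0:Fin 5) 1 3 = 3 := by decide
lemma sw01_4 : Equiv.swap (0:Fin 5) 1 4 = 4 := by decide
lemma sw12_0 : Equiv.swap (1:Fin 5) 2 0 = 0 := by decide
lemma sw12_1 : Equiv.swap (1:Fin 5) 2 1 = 2 := by decide
lemma sw12_2 : Equiv.swap (1:Fin 5) 2 2 = 1 := by decide
lemma sw12_3 : Equiv.swap (1:Fin 5) 2 3 = 3 := by decide
lemma sw12_4 : Equiv.swap (1:Fin 5) 2 4 = 4 := by decide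
lemma sw23_0 : Equiv.swap (2:Fin 5) 3 0 = 0 := by decide
lemma sw23_1 : Equiv.swap (2:Fin 5) 3 1 = 1 := by decide
lemma sw23_2 : Equiv.swap (2:Fin 5) 3 2 = 3 := by decide
lemma sw23_3 : Equiv.swap (2:Fin 5) 3 3 = 2 := by decide
lemma sw23_4 : Equiv.swap (2:Fin 5) 3 4 = 4 := by decide

/-- In `R = ℚ[x_1, …, x_5]` with `α_4 = x_5 - x_4` and `∂_i` the Demazure
operator for `s_i` (with `0`-based variable indices, `∂_i = demazure (i-1) i`,
`α_4 = X 4 - X 3`), we have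
`∂_1∂_2∂_3(α_4 · ∂_3(α_4² · ∂_3(α_4² · ∂_1∂_2∂_3(α_4² · ∂_2∂_3(α_4² · ∂_3(α_4²)))))) = -2`,
the result being the constant polynomial `-2`. -/
theorem demazure_entry_eq_neg_two :
    let α : MvPolynomial (Fin 5) ℚ := X 4 - X 3
    let D1 : MvPolynomial (Fin 5) ℚ → MvPolynomial (Fin 5) ℚ := demazure 0 1
    let D2 : MvPolynomial (Fin 5) ℚ → MvPolynomial (Fin 5) ℚ := demazure 1 2
    let D3 : MvPolynomial (Fin 5) ℚ → MvPolynomial (Fin 5) ℚ := demazure 2 3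
    D1 (D2 (D3 (α * D3 (α ^ 2 * D3 (α ^ 2 *
      D1 (D2 (D3 (α ^ 2 * D2 (D3 (α ^ 2 * D3 (α ^ 2)))))))))))
      = -2 := by
  show demazure 0 1 (demazure 1 2 (demazure 2 3 ((X 4 - X 3) * demazure 2 3 ((X 4 - X 3) ^ 2 * demazure 2 3 ((X 4 - X 3) ^ 2 * demazure 0 1 (demazure 1 2 (demazure 2 3 ((X 4 - X 3) ^ 2 * demazure 1 2 (demazure 2 3 ((X 4 - X 3) ^ 2 * demazure 2 3 ((X 4 - X 3) ^ 2))))))))))) = -2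
  have h1 : demazure 2 3 (((X 4 - X 3) ^ 2 : MvPolynomial (Fin 5) ℚ)) = X 2 + X 3 - 2*X 4 := by
    apply demazure_eq 2 3 (by decide)
    simp only [map_sub, map_add, map_mul, map_pow, map_neg, map_ofNat, map_one, rename_X, sw01_0, sw01_1, sw01_2, sw01_3, sw01_4, sw12_0, sw12_1, sw12_2, sw12_3, sw12_4, sw23_0, sw23_1, sw23_2, sw23_3, sw23_4]
    ring
  have h2 : demazure 2 3 (((X 4 - X 3) ^ 2 * (X 2 + X 3 - 2*X 4) : MvPolynomial (Fin 5) ℚ)) = X 2^2 + 2*X 2*X 3 - 4*X 2*X 4 + X 3^2 - 4*X 3*X 4 + 4*X 4^2 := by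
    apply demazure_eq 2 3 (by decide)
    simp only [map_sub, map_add, map_mul, map_pow, map_neg, map_ofNat, map_one, rename_X, sw01_0, sw01_1, sw01_2, sw01_3, sw01_4, sw12_0, sw12_1, sw12_2, sw12_3, sw12_4, sw23_0, sw23_1, sw23_2, sw23_3, sw23_4]
    ring
  have h3 : demazure 1 2 (((X 2^2 + 2*X 2*X 3 - 4*X 2*X 4 + X 3^2 - 4*X 3*X 4 + 4*X 4^2) : MvPolynomial (Fin 5) ℚ)) = X 1 + X 2 + 2*X 3 - 4*X 4 := by
    apply demazure_eq 1 2 (by decide)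
    simp only [map_sub, map_add, map_mul, map_pow, map_neg, map_ofNat, map_one, rename_X, sw01_0, sw01_1, sw01_2, sw01_3, sw01_4, sw12_0, sw12_1, sw12_2, sw12_3, sw12_4, sw23_0, sw23_1, sw23_2, sw23_3, sw23_4]
    ring
  have h4 : demazure 2 3 (((X 4 - X 3) ^ 2 * (X 1 + X 2 + 2*X 3 - 4*X 4) : MvPolynomial (Fin 5) ℚ)) = X 1*X 2 + X 1*X 3 - 2*X 1*X 4 + 2*X 2^2 + 3*X 2*X 3 - 8*X 2*X 4 + 2*X 3^2 - 8*X 3*X 4 + 9*X 4^2 := by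
    apply demazure_eq 2 3 (by decide)
    simp only [map_sub, map_add, map_mul, map_pow, map_neg, map_ofNat, map_one, rename_X, sw01_0, sw01_1, sw01_2, sw01_3, sw01_4, sw12_0, sw12_1, sw12_2, sw12_3, sw12_4, sw23_0, sw23_1, sw23_2, sw23_3, sw23_4]
    ring
  have h5 : demazure 1 2 (((X 1*X 2 + X 1*X 3 - 2*X 1*X 4 + 2*X 2^2 + 3*X 2*X 3 - 8*X 2*X 4 + 2*X 3^2 - 8*X 3*X 4 + 9*X 4^2) : MvPolynomial (Fin 5) ℚ)) = 2*X 1 + 2*X 2 + 2*X 3 - 6*X 4 := by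
    apply demazure_eq 1 2 (by decide)
    simp only [map_sub, map_add, map_mul, map_pow, map_neg, map_ofNat, map_one, rename_X, sw01_0, sw01_1, sw01_2, sw01_3, sw01_4, sw12_0, sw12_1, sw12_2, sw12_3, sw12_4, sw23_0, sw23_1, sw23_2, sw23_3, sw23_4]
    ring
  have h6 : demazure 0 1 (((2*X 1 + 2*X 2 + 2*X 3 - 6*X 4) : MvPolynomial (Fin 5) ℚ)) = 2 := by
    apply demazure_eq 0 1 (by decide)
    simp only [map_sub, map_add, map_mul, map_pow, map_neg, map_ofNat, map_one, rename_X, sw01_0, sw01_1, sw01_2, sw01_3, sw01_4, sw12_0, sw12_1, sw12_2, sw12_3, sw12_4, sw23_0, sw23_1, sw23_2, sw23_3, sw23_4]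
    ring
  have h7 : demazure 2 3 (((X 4 - X 3) ^ 2 * 2 : MvPolynomial (Fin 5) ℚ)) = 2*X 2 + 2*X 3 - 4*X 4 := by
    apply demazure_eq 2 3 (by decide)
    simp only [map_sub, map_add, map_mul, map_pow, map_neg, map_ofNat, map_one, rename_X, sw01_0, sw01_1, sw01_2, sw01_3, sw01_4, sw12_0, sw12_1, sw12_2, sw12_3, sw12_4, sw23_0, sw23_1, sw23_2, sw23_3, sw23_4]
    ring
  have h8 : demazure 2 3 (((X 4 - X 3) ^ 2 * (2*X 2 + 2*X 3 - 4*X 4) : MvPolynomial (Fin 5) ℚ)) = 2*X 2^2 + 4*X 2*X 3 - 8*X 2*X 4 + 2*X 3^2 - 8*X 3*X 4 + 8*X 4^2 := by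
    apply demazure_eq 2 3 (by decide)
    simp only [map_sub, map_add, map_mul, map_pow, map_neg, map_ofNat, map_one, rename_X, sw01_0, sw01_1, sw01_2, sw01_3, sw01_4, sw12_0, sw12_1, sw12_2, sw12_3, sw12_4, sw23_0, sw23_1, sw23_2, sw23_3, sw23_4]
    ring
  have h9 : demazure 2 3 (((X 4 - X 3) * (2*X 2^2 + 4*X 2*X 3 - 8*X 2*X 4 + 2*X 3^2 - 8*X 3*X 4 + 8*X 4^2) : MvPolynomial (Fin 5) ℚ)) = -2*X 2^2 - 4*X 2*X 3 + 8*X 2*X 4 - 2*X 3^2 + 8*X 3*X 4 - 8*X 4^2 := by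
    apply demazure_eq 2 3 (by decide)
    simp only [map_sub, map_add, map_mul, map_pow, map_neg, map_ofNat, map_one, rename_X, sw01_0, sw01_1, sw01_2, sw01_3, sw01_4, sw12_0, sw12_1, sw12_2, sw12_3, sw12_4, sw23_0, sw23_1, sw23_2, sw23_3, sw23_4]
    ring
  have h10 : demazure 1 2 (((-2*X 2^2 - 4*X 2*X 3 + 8*X 2*X 4 - 2*X 3^2 + 8*X 3*X 4 - 8*X 4^2) : MvPolynomial (Fin 5) ℚ)) = -2*X 1 - 2*X 2 - 4*X 3 + 8*X 4 := by
    apply demazure_eq 1 2 (by decide)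
    simp only [map_sub, map_add, map_mul, map_pow, map_neg, map_ofNat, map_one, rename_X, sw01_0, sw01_1, sw01_2, sw01_3, sw01_4, sw12_0, sw12_1, sw12_2, sw12_3, sw12_4, sw23_0, sw23_1, sw23_2, sw23_3, sw23_4]
    ring
  have h11 : demazure 0 1 (((-2*X 1 - 2*X 2 - 4*X 3 + 8*X 4) : MvPolynomial (Fin 5) ℚ)) = (-2) := by
    apply demazure_eq 0 1 (by decide)
    simp only [map_sub, map_add, map_mul, map_pow, map_neg, map_ofNat, map_one, rename_X, sw01_0, sw01_1, sw01_2, sw01_3, sw01_4, sw12_0, sw12_1, sw12_2, sw12_3, sw12_4, sw23_0, sw23_1, sw23_2, sw23_3, sw23_4]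
    ring
  rw [h1, h2, h3, h4, h5, h6, h7, h8, h9, h10, h11]
end

section
/- Let (W,S) be a Coxeter system, A ⊆ S, and W^A the set of minimal length coset representatives of W/W_A. For any expression x̲ = (s_1,...,s_m), the element m_{x̲} := b_{s_1}···b_{s_m}·m_id of the spherical module M satisfies Deodhar's formula: m_{x̲} = Σ_{e̲ ⊆ x̲} v^{pdf(e̲)} · m_{x̲^{e̲}}, where the sum is over all subexpressions e̲ ∈ {0,1}^m, x̲^{e̲} is viewed in W/W_A, and pdf is the parabolic defect. -/
open LaurentPolynomial

variable {B W : Type*} [Group W] {M : CoxeterMatrix B}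

/-- The standard parabolic subgroup `W_A` generated by the simple reflections in `A`. -/
def parabolic (cs : CoxeterSystem M W) (A : Set B) : Subgroup W :=
  Subgroup.closure (cs.simple '' A)

/-- `x` is a minimal length representative of its coset `x W_A`. -/
def IsMinRep (cs : CoxeterSystem M W) (A : Set B) (x : W) : Prop :=
  ∀ u ∈ parabolic cs A, cs.length x ≤ cs.length (x * u)

theorem isMinRep_one (cs : CoxeterSystem M W) (A : Set B) : IsMinRep cs A 1 := by
  intro u _
  rw [cs.length_one]
  exact Nat.zero_le _

/-- The length of a minimal representative of the coset `y W_A`. -/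
noncomputable def cosetLength (cs : CoxeterSystem M W) (A : Set B) (y : W) : ℕ :=
  sInf {l : ℕ | ∃ u ∈ parabolic cs A, cs.length (y * u) = l}

theorem exists_minRep (cs : CoxeterSystem M W) (A : Set B) (y : W) :
    ∃ z : W, (∃ u ∈ parabolic cs A, y * u = z) ∧ IsMinRep cs A z := by
  classical
  set S : Set ℕ := {l : ℕ | ∃ u ∈ parabolic cs A, cs.length (y * u) = l} with hS
  have hne : S.Nonempty := ⟨cs.length y, 1, one_mem _, by rw [mul_one]⟩
  obtain ⟨u, hu, hlen⟩ := Nat.sInf_mem hne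
  refine ⟨y * u, ⟨u, hu, rfl⟩, ?_⟩
  intro u' hu'
  rw [hlen]
  have hassoc : y * u * u' = y * (u * u') := by rw [mul_assoc]
  rw [hassoc]
  exact Nat.sInf_le ⟨u * u', mul_mem hu hu', rfl⟩

/-- The minimal length representative of the coset `y W_A`. -/
noncomputable def minRep (cs : CoxeterSystem M W) (A : Set B) (y : W) :
    {z : W // IsMinRep cs A z} :=
  ⟨(exists_minRep cs A y).choose, (exists_minRep cs A y).choose_spec.2⟩

/-- The letter of the subexpression `e̲` of the word `w` at position `t`:
`s_{w t}` if `e t = 1` and the identity if `e t = 0`. -/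
def subLetter (cs : CoxeterSystem M W) {m : ℕ} (w : Fin m → B) (e : Fin m → Bool)
    (t : Fin m) : W :=
  if e t then cs.simple (w t) else 1

/-- The product of the letters of the subexpression `e̲` from position `j` on, i.e. the
element `y_{m-j}` of Deodhar's sequence. -/
def suffixProd (cs : CoxeterSystem M W) {m : ℕ} (w : Fin m → B) (e : Fin m → Bool)
    (j : ℕ) : W :=
  (((List.ofFn (subLetter cs w e)).drop j)).prod

/-- Position `t` of the subexpression is decorated `S` (Stay): `s_{w t}` fixes the coset
of `y_{m-t-1}` in `W/W_A`. -/
def DecorS (cs : CoxeterSystem M W) (A : Set B) {m : ℕ} (w : Fin m → B)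
    (e : Fin m → Bool) (t : Fin m) : Prop :=
  (suffixProd cs w e (t + 1))⁻¹ * cs.simple (w t) * suffixProd cs w e (t + 1) ∈
    parabolic cs A

/-- Position `t` is decorated `U` (Up): `s_{w t}` raises the coset of `y_{m-t-1}` in
`W/W_A`. -/
def DecorU (cs : CoxeterSystem M W) (A : Set B) {m : ℕ} (w : Fin m → B)
    (e : Fin m → Bool) (t : Fin m) : Prop :=
  ¬ DecorS cs A w e t ∧
    cosetLength cs A (suffixProd cs w e (t + 1)) <
      cosetLength cs A (cs.simple (w t) * suffixProd cs w e (t + 1))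

/-- Position `t` is decorated `D` (Down): `s_{w t}` lowers the coset of `y_{m-t-1}` in
`W/W_A`. -/
def DecorD (cs : CoxeterSystem M W) (A : Set B) {m : ℕ} (w : Fin m → B)
    (e : Fin m → Bool) (t : Fin m) : Prop :=
  ¬ DecorS cs A w e t ∧
    cosetLength cs A (cs.simple (w t) * suffixProd cs w e (t + 1)) <
      cosetLength cs A (suffixProd cs w e (t + 1))

open scoped Classical in
/-- The parabolic defect of the subexpression `e̲` of `w`:
`pdf(e̲) = #{U0 or S1} − #{D0 or S0}`. -/
noncomputable def pdf (cs : CoxeterSystem M W) (A : Set B) {m : ℕ} (w : Fin m → B)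
    (e : Fin m → Bool) : ℤ :=
  ((Finset.univ.filter fun t : Fin m =>
      (DecorU cs A w e t ∧ e t = false) ∨ (DecorS cs A w e t ∧ e t = true)).card : ℤ) -
    ((Finset.univ.filter fun t : Fin m =>
      (DecorD cs A w e t ∧ e t = false) ∨ (DecorS cs A w e t ∧ e t = false)).card : ℤ)

/-! Deodhar's formula follows by induction on the length of the expression. Applying `b_s` to
`m_y`, where `y` is the product of the later letters of the subexpression, produces `m_{sy}` and
`m_y` with exactly the powers of `v` that the decoration (U, D or S) of the new letter contributes
to the defect when it is taken or skipped. Identifying `m_{sy}` is the Coxeter-theoretic input: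
minimal coset representatives are unique, and if `s` does not fix the coset of a minimal
representative `z`, then `sz` is again minimal (Deodhar's lemma). Both rest on the strong exchange
condition, obtained from Tits' sign representation of `W` on `W × {±1}`. -/

open List

namespace CoxeterSystem

variable (cs : CoxeterSystem M W)

local prefix:100 "s" => cs.simple
local prefix:100 "π" => cs.wordProd
local prefix:100 "ris " => cs.rightInvSeq
local prefix:100 "lis " => cs.leftInvSeq

theorem rightInvSeq_append (ω ω' : List B) :
    ris (ω ++ ω') = (ris ω).map (MulAut.conj (π ω')⁻¹) ++ ris ω' := by
  induction ω with
  | nil => simp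
  | cons i ω ih =>
    simp only [cons_append, rightInvSeq, ih, map_cons, wordProd_append, MulAut.conj_apply,
      inv_inv, mul_inv_rev]
    group

theorem reverse_alternatingWord_two_mul (i i' : B) (p : ℕ) :
    (alternatingWord i i' (2 * p)).reverse = alternatingWord i' i (2 * p) := by
  refine List.ext_getElem (by simp) fun k hk hk' => ?_
  simp only [length_reverse, length_alternatingWord] at hk
  rw [getElem_reverse, getElem_alternatingWord _ _ _ _ (by simp; omega),
    getElem_alternatingWord _ _ _ _ (by simpa using hk')]
  simp only [length_alternatingWord]
  have : Even (2 * p + (2 * p - 1 - k)) ↔ ¬ Even (2 * p + k) := by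
    rw [Nat.even_add, Nat.even_add, Nat.even_sub (by omega), Nat.even_sub (by omega)]
    simp [parity_simps]
  split_ifs <;> tauto

theorem leftInvSeq_alternatingWord_two_mul (i i' : B) (p : ℕ) :
    lis (alternatingWord i i' (2 * p)) =
      (List.range (2 * p)).map fun k => s i * (s i' * s i) ^ k := by
  refine List.ext_getElem (by simp) fun k hk _ => ?_
  simp only [length_leftInvSeq, length_alternatingWord] at hk
  rw [getElem_leftInvSeq_alternatingWord cs i i' p k hk, prod_alternatingWord_eq_mul_pow,
    getElem_map, getElem_range, if_neg (by simp [parity_simps]), Nat.mul_add_div two_pos]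
  simp

section Sign

variable [DecidableEq W]

theorem even_count_rightInvSeq_alternatingWord (i i' : B) (t : W) :
    Even ((ris (alternatingWord i i' (2 * M i i'))).count t) := by
  rw [← reverse_alternatingWord_two_mul, rightInvSeq_reverse, count_reverse,
    leftInvSeq_alternatingWord_two_mul, two_mul, range_add, map_append, count_append, map_map]
  have hper : ((fun k => s i' * (s i * s i') ^ k) ∘ (M i i' + ·)) =
      fun k => s i' * (s i * s i') ^ k := by
    funext k
    simp [pow_add, cs.simple_mul_simple_pow]
  rw [hper]
  exact ⟨_, rfl⟩

def reflectionPerm (i : B) : Equiv.Perm (W × ℤˣ) :=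
  Function.Involutive.toPerm (fun p => (s i * p.1 * s i, if p.1 = s i then -p.2 else p.2)) (by
    rintro ⟨t, ε⟩
    by_cases h : t = s i
    · simp [h]
    · simp [h, mul_assoc, mul_eq_one_iff_eq_inv])

theorem reflectionPerm_apply (i : B) (p : W × ℤˣ) :
    cs.reflectionPerm i p = (s i * p.1 * s i, if p.1 = s i then -p.2 else p.2) :=
  rfl

theorem prod_map_reflectionPerm_apply (ω : List B) (t : W) (ε : ℤˣ) :
    (ω.map cs.reflectionPerm).prod (t, ε) =
      (π ω * t * (π ω)⁻¹, (-1) ^ (ris ω).count t * ε) := by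
  induction ω generalizing t ε with
  | nil => simp
  | cons i ω ih =>
    have hiff : π ω * t * (π ω)⁻¹ = s i ↔ (π ω)⁻¹ * s i * π ω = t := by
      constructor <;> intro h <;> rw [← h] <;> group
    simp only [map_cons, prod_cons, Equiv.Perm.mul_apply, ih, reflectionPerm_apply,
      rightInvSeq, count_cons, wordProd_cons, beq_iff_eq, ← hiff]
    by_cases h : π ω * t * (π ω)⁻¹ = s i
    · simp only [if_pos h]
      simp [pow_succ, mul_assoc]
    · simp only [if_neg h]
      simp [mul_assoc]

theorem prod_map_alternatingWord_two_mul {G : Type*} [Monoid G] (f : B → G) (i i' : B) (p : ℕ) :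
    ((alternatingWord i i' (2 * p)).map f).prod = (f i * f i') ^ p := by
  induction p with
  | zero => simp [alternatingWord]
  | succ p ih =>
    rw [show 2 * (p + 1) = 2 * p + 1 + 1 by ring, alternatingWord_succ', alternatingWord_succ',
      if_neg (by simp [parity_simps]), if_pos (by simp [parity_simps])]
    simp [ih, pow_succ', mul_assoc]

theorem isLiftable_reflectionPerm : M.IsLiftable cs.reflectionPerm := by
  intro i i'
  rw [← prod_map_alternatingWord_two_mul]
  ext ⟨t, ε⟩ : 1
  obtain ⟨k, hk⟩ := even_count_rightInvSeq_alternatingWord cs i i' t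
  rw [prod_map_reflectionPerm_apply, hk, ← two_mul, pow_mul]
  simp [prod_alternatingWord_eq_mul_pow]

def reflectionRep : W →* Equiv.Perm (W × ℤˣ) :=
  cs.lift ⟨cs.reflectionPerm, cs.isLiftable_reflectionPerm⟩

theorem reflectionRep_simple (i : B) : cs.reflectionRep (s i) = cs.reflectionPerm i :=
  cs.lift_apply_simple _ i

theorem reflectionRep_wordProd_apply (ω : List B) (t : W) (ε : ℤˣ) :
    cs.reflectionRep (π ω) (t, ε) = (π ω * t * (π ω)⁻¹, (-1) ^ (ris ω).count t * ε) := by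
  rw [← prod_map_reflectionPerm_apply, wordProd, map_list_prod, map_map]
  congr 3
  exact funext cs.reflectionRep_simple

theorem exists_reflectionRep_apply (w x : W) :
    ∃ σ : ℤˣ, ∀ ε, cs.reflectionRep w (x, ε) = (w * x * w⁻¹, σ * ε) := by
  obtain ⟨ω, -, rfl⟩ := cs.exists_isReduced w
  exact ⟨_, cs.reflectionRep_wordProd_apply ω x⟩

theorem odd_count_rightInvSeq_iff {ω ω' : List B} (h : π ω = π ω') (t : W) :
    Odd ((ris ω).count t) ↔ Odd ((ris ω').count t) := by
  have hω := cs.reflectionRep_wordProd_apply ω t 1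
  rw [h, cs.reflectionRep_wordProd_apply ω' t 1] at hω
  have hsign := congrArg Prod.snd hω
  simp only [mul_one] at hsign
  rw [← neg_one_pow_eq_neg_one_iff_odd (R := ℤˣ) (by decide), ← hsign,
    neg_one_pow_eq_neg_one_iff_odd (by decide)]

/-- Conjugating `t = u s u⁻¹` down to the simple reflection `s`, the sign flips exactly once. -/
theorem odd_count_rightInvSeq_self {ρ : List B} {t : W} (ht : cs.IsReflection t)
    (hρ : π ρ = t) : Odd ((ris ρ).count t) := by
  obtain ⟨u, k, rfl⟩ := ht
  obtain ⟨σ, hσ⟩ := cs.exists_reflectionRep_apply u⁻¹ (u * s k * u⁻¹)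
  have hconj : u⁻¹ * (u * s k * u⁻¹) * u⁻¹⁻¹ = s k := by group
  have hflip : cs.reflectionRep (s k) (cs.reflectionRep u⁻¹ (u * s k * u⁻¹, 1)) =
      cs.reflectionRep u⁻¹ (u * s k * u⁻¹, -1) := by
    rw [hσ, hσ, hconj, reflectionRep_simple, reflectionPerm_apply]
    simp
  have hself : cs.reflectionRep (u * s k * u⁻¹) (u * s k * u⁻¹, 1) = (u * s k * u⁻¹, -1) := by
    rw [map_mul, map_mul, Equiv.Perm.mul_apply, Equiv.Perm.mul_apply, hflip,
      ← Equiv.Perm.mul_apply, ← map_mul, mul_inv_cancel, map_one, Equiv.Perm.one_apply]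
  rw [← hρ, cs.reflectionRep_wordProd_apply, hρ, mul_one] at hself
  exact (neg_one_pow_eq_neg_one_iff_odd (by decide)).mp (congrArg Prod.snd hself)

end Sign

/-- The strong exchange condition. -/
theorem mem_rightInvSeq_of_isRightInversion {ω : List B} {t : W}
    (ht : cs.IsRightInversion (π ω) t) : t ∈ ris ω := by
  classical
  obtain ⟨ωv, hred, hv⟩ := cs.exists_isReduced (π ω * t)
  obtain ⟨ρ, -, hρ⟩ := cs.exists_isReduced t
  have hmul : π ω * t * t = π ω := by rw [mul_assoc, ht.1.mul_self, mul_one]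
  have hnot : t ∉ ris ωv := fun hmem => by
    have := (cs.isRightInversion_of_mem_rightInvSeq hred hmem).2
    rw [← hv, hmul] at this
    exact lt_asymm this ht.2
  have hfix : MulAut.conj (π ρ)⁻¹ t = t := by simp [← hρ, ht.1.inv, ht.1.mul_self]
  have hodd : Odd ((ris (ωv ++ ρ)).count t) := by
    rw [rightInvSeq_append, count_append, ← hfix,
      count_map_of_injective _ _ (MulEquiv.injective _), hfix, count_eq_zero.mpr hnot, zero_add]
    exact cs.odd_count_rightInvSeq_self ht.1 hρ.symm
  have hprod : π (ωv ++ ρ) = π ω := by rw [wordProd_append, ← hv, ← hρ, hmul]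
  exact count_pos_iff.mp ((cs.odd_count_rightInvSeq_iff hprod t).mp hodd).pos

end CoxeterSystem

section MinimalCosetRepresentatives

open CoxeterSystem

variable (cs : CoxeterSystem M W) {A : Set B}

local prefix:100 "s" => cs.simple
local prefix:100 "π" => cs.wordProd
local prefix:100 "ℓ" => cs.length
local prefix:100 "ris " => cs.rightInvSeq

theorem simple_mem_parabolic {a : B} (ha : a ∈ A) : s a ∈ parabolic cs A :=
  Subgroup.subset_closure ⟨a, ha, rfl⟩

theorem mem_parabolic_iff {u : W} :
    u ∈ parabolic cs A ↔ ∃ l : List B, (∀ b ∈ l, b ∈ A) ∧ π l = u := by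
  constructor
  · intro hu
    induction hu using Subgroup.closure_induction with
    | mem x hx =>
      obtain ⟨a, ha, rfl⟩ := hx
      exact ⟨[a], by simpa using ha, by simp⟩
    | one => exact ⟨[], by simp, by simp⟩
    | mul x y _ _ hx hy =>
      obtain ⟨lx, hlx, rfl⟩ := hx
      obtain ⟨ly, hly, rfl⟩ := hy
      exact ⟨lx ++ ly, by simpa [or_imp, forall_and] using And.intro hlx hly, by
        simp [wordProd_append]⟩
    | inv x _ hx =>
      obtain ⟨l, hl, rfl⟩ := hx
      exact ⟨l.reverse, by simpa using hl, by simp⟩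
  · rintro ⟨l, hl, rfl⟩
    induction l with
    | nil => simp
    | cons a l ih =>
      rw [wordProd_cons]
      exact mul_mem (simple_mem_parabolic cs (hl a mem_cons_self))
        (ih fun b hb => hl b (mem_cons_of_mem a hb))

theorem rightInvSeq_mem_parabolic {l : List B} (hl : ∀ b ∈ l, b ∈ A) {x : W}
    (hx : x ∈ ris l) : x ∈ parabolic cs A := by
  induction l with
  | nil => simp at hx
  | cons a l ih =>
    have hlA : ∀ b ∈ l, b ∈ A := fun b hb => hl b (mem_cons_of_mem a hb)
    rcases mem_cons.mp hx with rfl | hx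
    · have hπ := (mem_parabolic_iff cs).mpr ⟨l, hlA, rfl⟩
      exact mul_mem (mul_mem (inv_mem hπ) (simple_mem_parabolic cs (hl a mem_cons_self))) hπ
    · exact ih hlA hx

theorem exists_shortest_parabolic_word {u : W} (hu : u ∈ parabolic cs A) :
    ∃ l : List B, (∀ b ∈ l, b ∈ A) ∧ π l = u ∧
      ∀ l' : List B, (∀ b ∈ l', b ∈ A) → π l' = u → l.length ≤ l'.length := by
  classical
  have hex : ∃ n, ∃ l : List B, (∀ b ∈ l, b ∈ A) ∧ π l = u ∧ l.length = n := by
    obtain ⟨l, hl, hπ⟩ := (mem_parabolic_iff cs).mp hu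
    exact ⟨_, l, hl, hπ, rfl⟩
  obtain ⟨l, hl, hπ, hlen⟩ := Nat.find_spec hex
  exact ⟨l, hl, hπ, fun l' hl' hπ' => hlen ▸ Nat.find_min' hex ⟨l', hl', hπ', rfl⟩⟩

/-- A descent of `z * π l` at the last letter of `l` would, by the exchange condition, either
be a right inversion of `z` lying in `W_A`, or allow deleting a letter of `l`. -/
theorem length_mul_wordProd_of_isMinRep {z : W} (hz : IsMinRep cs A z) {l : List B}
    (hl : ∀ b ∈ l, b ∈ A)
    (hmin : ∀ l' : List B, (∀ b ∈ l', b ∈ A) → π l' = π l → l.length ≤ l'.length) :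
    ℓ (z * π l) = ℓ z + l.length := by
  induction l using List.reverseRecOn with
  | nil => simp
  | append_singleton l a ih =>
    have hlA : ∀ b ∈ l, b ∈ A := fun b hb => hl b (mem_append_left _ hb)
    have haA : a ∈ A := hl a (by simp)
    have ih' := ih hlA fun l' hl' hπ' => by
      simpa using hmin (l' ++ [a]) (by simpa [or_imp, forall_and] using And.intro hl' haA)
        (by simp [wordProd_append, hπ'])
    rw [wordProd_append, wordProd_singleton, ← mul_assoc, length_append, length_singleton,
      ← add_assoc, ← ih']
    refine (cs.length_mul_simple (z * π l) a).resolve_right fun hdown => ?_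
    obtain ⟨ωz, hred, rfl⟩ := cs.exists_isReduced z
    have hinv : s a ∈ ris (ωz ++ l) := cs.mem_rightInvSeq_of_isRightInversion
      ⟨cs.isReflection_simple a, by rw [wordProd_append]; omega⟩
    rw [rightInvSeq_append, mem_append, mem_map] at hinv
    rcases hinv with ⟨x, hx, hxa⟩ | hmem
    · have hxA : x ∈ parabolic cs A := by
        have hπ := (mem_parabolic_iff cs).mpr ⟨l, hlA, rfl⟩
        rw [show x = π l * s a * (π l)⁻¹ by rw [← hxa]; simp [mul_assoc]]
        exact mul_mem (mul_mem hπ (simple_mem_parabolic cs haA)) (inv_mem hπ)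
      exact absurd (hz x hxA) (not_le.mpr (cs.isRightInversion_of_mem_rightInvSeq hred hx).2)
    · obtain ⟨j, hj, hja⟩ := getElem_of_mem hmem
      have herase : π (l.eraseIdx j) = π (l ++ [a]) := by
        rw [← cs.wordProd_mul_getD_rightInvSeq, getD_eq_getElem _ _ hj, hja, wordProd_append,
          wordProd_singleton]
      have := hmin (l.eraseIdx j) (fun b hb => hlA b (mem_of_mem_eraseIdx hb)) herase
      simp only [length_rightInvSeq] at hj
      simp [length_eraseIdx_of_lt hj] at this
      omega

theorem eq_of_isMinRep_of_mul_eq {z z' u : W} (hz : IsMinRep cs A z) (hz' : IsMinRep cs A z')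
    (hu : u ∈ parabolic cs A) (h : z * u = z') : z = z' := by
  obtain ⟨l, hl, rfl, hmin⟩ := exists_shortest_parabolic_word cs hu
  have hlen := length_mul_wordProd_of_isMinRep cs hz hl hmin
  rw [h] at hlen
  have hle : ℓ z' ≤ ℓ z := by simpa [← h] using hz' (π l)⁻¹ (inv_mem hu)
  have hnil : l = [] := length_eq_zero_iff.mp (by omega)
  simpa [hnil] using h

theorem minRep_spec (y : W) : ∃ u ∈ parabolic cs A, y * u = (minRep cs A y).1 :=
  (exists_minRep cs A y).choose_spec.1

theorem conj_mul_mem_parabolic_iff {y u : W} (hu : u ∈ parabolic cs A) (g : W) :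
    (y * u)⁻¹ * g * (y * u) ∈ parabolic cs A ↔ y⁻¹ * g * y ∈ parabolic cs A := by
  rw [show (y * u)⁻¹ * g * (y * u) = u⁻¹ * (y⁻¹ * g * y) * u by group,
    Subgroup.mul_mem_cancel_right _ hu, Subgroup.mul_mem_cancel_left _ (inv_mem hu)]

theorem minRep_eq_of_mul_eq {y z u : W} (hz : IsMinRep cs A z) (hu : u ∈ parabolic cs A)
    (h : y * u = z) : (minRep cs A y).1 = z := by
  obtain ⟨u₀, hu₀, h₀⟩ := minRep_spec cs (A := A) y
  refine eq_of_isMinRep_of_mul_eq cs (minRep cs A y).2 hz (mul_mem (inv_mem hu₀) hu) ?_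
  rw [← h₀, ← h]
  group

theorem minRep_one : minRep cs A 1 = ⟨1, isMinRep_one cs A⟩ :=
  Subtype.ext (minRep_eq_of_mul_eq cs (isMinRep_one cs A) (one_mem _) (one_mul 1))

theorem cosetLength_eq_length_minRep (y : W) :
    cosetLength cs A y = ℓ (minRep cs A y).1 := by
  obtain ⟨u₀, hu₀, h₀⟩ := minRep_spec cs (A := A) y
  refine le_antisymm (Nat.sInf_le ⟨u₀, hu₀, by rw [h₀]⟩) (le_csInf ⟨_, 1, one_mem _, rfl⟩ ?_)
  rintro _ ⟨u, hu, rfl⟩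
  rw [show y * u = (minRep cs A y).1 * (u₀⁻¹ * u) by rw [← h₀]; group]
  exact (minRep cs A y).2 _ (mul_mem (inv_mem hu₀) hu)

/-- Deodhar's lemma. If `s z u` were shorter than `s z`, the reflection `t` with `z u t = s z u`
would be a right inversion of `z u`; by the exchange condition it comes either from `z`, where it
is `z⁻¹ s z` and would make `s z < z`, or from `u`, which would put `z⁻¹ s z` in `W_A`. -/
theorem isMinRep_simple_mul {z : W} (hz : IsMinRep cs A z) (i : B)
    (hS : z⁻¹ * s i * z ∉ parabolic cs A) : IsMinRep cs A (s i * z) := by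
  intro u hu
  have hzu := hz u hu
  rcases cs.length_simple_mul z i with hup | hdown
  · by_contra! hlt
    set t := (z * u)⁻¹ * s i * (z * u) with ht
    have hzut : z * u * t = s i * z * u := by rw [ht]; group
    have htref : cs.IsReflection t := ⟨(z * u)⁻¹, i, by rw [ht, inv_inv]⟩
    have hne := htref.length_mul_left_ne (z * u)
    obtain ⟨ωz, hred, rfl⟩ := cs.exists_isReduced z
    obtain ⟨l, hl, rfl⟩ := (mem_parabolic_iff cs).mp hu
    have hinv : t ∈ ris (ωz ++ l) := cs.mem_rightInvSeq_of_isRightInversion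
      ⟨htref, by rw [wordProd_append, hzut] at *; omega⟩
    rw [rightInvSeq_append, mem_append, mem_map] at hinv
    rcases hinv with ⟨x, hx, hxt⟩ | hmem
    · have hx' : x = (π ωz)⁻¹ * s i * π ωz := by
        rw [show x = π l * t * (π l)⁻¹ by rw [← hxt]; simp [mul_assoc], ht]
        group
      have := (cs.isRightInversion_of_mem_rightInvSeq hred hx).2
      rw [hx', show π ωz * ((π ωz)⁻¹ * s i * π ωz) = s i * π ωz by group] at this
      omega
    · apply hS
      rw [show (π ωz)⁻¹ * s i * π ωz = π l * t * (π l)⁻¹ by rw [ht]; group]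
      exact mul_mem (mul_mem hu (rightInvSeq_mem_parabolic cs hl hmem)) (inv_mem hu)
  · have := cs.length_simple_mul (s i * z * u) i
    rw [show s i * (s i * z * u) = z * u by simp [mul_assoc]] at this
    omega

end MinimalCosetRepresentatives

section Subexpressions

variable (cs : CoxeterSystem M W) (A : Set B)

open scoped Classical in
noncomputable def letterDefect (i : B) (y : W) (c : Bool) : ℤ :=
  let S := y⁻¹ * cs.simple i * y ∈ parabolic cs A
  let U := ¬ S ∧ cosetLength cs A y < cosetLength cs A (cs.simple i * y)
  let D := ¬ S ∧ cosetLength cs A (cs.simple i * y) < cosetLength cs A y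
  (if (U ∧ c = false) ∨ (S ∧ c = true) then 1 else 0) -
    (if (D ∧ c = false) ∨ (S ∧ c = false) then 1 else 0)

variable {m : ℕ} (w : Fin (m + 1) → B) (c : Bool) (e : Fin m → Bool)

theorem ofFn_subLetter_cons :
    List.ofFn (subLetter cs w (Fin.cons c e)) =
      (if c then cs.simple (w 0) else 1) :: List.ofFn (subLetter cs (Fin.tail w) e) := by
  simp only [List.ofFn_succ, subLetter, Fin.cons_zero, Fin.cons_succ]
  rfl

theorem suffixProd_cons_succ (j : ℕ) :
    suffixProd cs w (Fin.cons c e) (j + 1) = suffixProd cs (Fin.tail w) e j := by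
  rw [suffixProd, ofFn_subLetter_cons, List.drop_succ_cons, suffixProd]

theorem suffixProd_cons_zero :
    suffixProd cs w (Fin.cons c e) 0 =
      (if c then cs.simple (w 0) else 1) * suffixProd cs (Fin.tail w) e 0 := by
  rw [suffixProd, ofFn_subLetter_cons, List.drop_zero, List.prod_cons, suffixProd,
    List.drop_zero]

theorem decorS_cons_succ (t : Fin m) :
    DecorS cs A w (Fin.cons c e) t.succ ↔ DecorS cs A (Fin.tail w) e t := by
  rw [DecorS, DecorS, Fin.val_succ, suffixProd_cons_succ]
  rfl

theorem decorU_cons_succ (t : Fin m) :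
    DecorU cs A w (Fin.cons c e) t.succ ↔ DecorU cs A (Fin.tail w) e t := by
  rw [DecorU, DecorU, decorS_cons_succ, Fin.val_succ, suffixProd_cons_succ]
  rfl

theorem decorD_cons_succ (t : Fin m) :
    DecorD cs A w (Fin.cons c e) t.succ ↔ DecorD cs A (Fin.tail w) e t := by
  rw [DecorD, DecorD, decorS_cons_succ, Fin.val_succ, suffixProd_cons_succ]
  rfl

theorem pdf_cons :
    pdf cs A w (Fin.cons c e) =
      letterDefect cs A (w 0) (suffixProd cs (Fin.tail w) e 0) c + pdf cs A (Fin.tail w) e := by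
  have h0 : suffixProd cs w (Fin.cons c e) (((0 : Fin (m + 1)) : ℕ) + 1) =
      suffixProd cs (Fin.tail w) e 0 := suffixProd_cons_succ cs w c e 0
  classical
  simp only [pdf, Finset.card_filter, Nat.cast_sum, Fin.sum_univ_succ, Fin.cons_zero,
    Fin.cons_succ, decorS_cons_succ, decorU_cons_succ, decorD_cons_succ, letterDefect]
  simp only [DecorU, DecorD, DecorS, h0]
  push_cast
  ring

end Subexpressions

section SphericalModule

variable {R V : Type*} [CommSemiring R] [AddCommMonoid V] [Module R[T;T⁻¹] V]
  (cs : CoxeterSystem M W) (A : Set B)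

local prefix:100 "s" => cs.simple
local prefix:100 "ℓ" => cs.length

structure IsSphericalAction (mx : {x : W // IsMinRep cs A x} → V)
    (b : B → Module.End R[T;T⁻¹] V) : Prop where
  up : ∀ (i : B) (x : {x : W // IsMinRep cs A x}) (hm : IsMinRep cs A (s i * x.1)),
    ℓ x.1 < ℓ (s i * x.1) → b i (mx x) = mx ⟨s i * x.1, hm⟩ + (T 1 : R[T;T⁻¹]) • mx x
  down : ∀ (i : B) (x : {x : W // IsMinRep cs A x}) (hm : IsMinRep cs A (s i * x.1)),
    ℓ (s i * x.1) < ℓ x.1 → b i (mx x) = mx ⟨s i * x.1, hm⟩ + (T (-1) : R[T;T⁻¹]) • mx x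
  stay : ∀ (i : B) (x : {x : W // IsMinRep cs A x}),
    x.1⁻¹ * s i * x.1 ∈ parabolic cs A → b i (mx x) = (T 1 + T (-1) : R[T;T⁻¹]) • mx x

variable {cs A} {mx : {x : W // IsMinRep cs A x} → V} {b : B → Module.End R[T;T⁻¹] V}

theorem IsSphericalAction.apply_minRep (hb : IsSphericalAction cs A mx b) (i : B) (y : W) :
    b i (mx (minRep cs A y)) =
      (T (letterDefect cs A i y true) : R[T;T⁻¹]) • mx (minRep cs A (s i * y)) +
        (T (letterDefect cs A i y false) : R[T;T⁻¹]) • mx (minRep cs A y) := by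
  classical
  obtain ⟨u, hu, hyu⟩ := minRep_spec cs (A := A) y
  set z := minRep cs A y
  have hconj : z.1⁻¹ * s i * z.1 ∈ parabolic cs A ↔ y⁻¹ * s i * y ∈ parabolic cs A := by
    rw [← hyu]
    exact conj_mul_mem_parabolic_iff cs hu _
  by_cases hS : y⁻¹ * s i * y ∈ parabolic cs A
  · have hsz : minRep cs A (s i * y) = z := Subtype.ext <|
      minRep_eq_of_mul_eq cs z.2 (mul_mem hS hu) (by rw [← hyu]; simp [mul_assoc])
    simp [letterDefect, hS, hsz, hb.stay i z (hconj.mpr hS), add_smul]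
  · have hmin := isMinRep_simple_mul cs z.2 i (mt hconj.mp hS)
    have hsz : minRep cs A (s i * y) = ⟨s i * z.1, hmin⟩ :=
      Subtype.ext (minRep_eq_of_mul_eq cs hmin hu (by rw [mul_assoc, hyu]))
    have hlen : cosetLength cs A y = ℓ z.1 ∧ cosetLength cs A (s i * y) = ℓ (s i * z.1) := by
      rw [cosetLength_eq_length_minRep, cosetLength_eq_length_minRep, hsz]
      exact ⟨rfl, rfl⟩
    rcases cs.length_simple_mul z.1 i with hup | hdown
    · have hlt : ℓ z.1 < ℓ (s i * z.1) := by omega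
      simp [letterDefect, hS, hsz, hlen, hlt, lt_asymm hlt, hb.up i z hmin hlt]
    · have hlt : ℓ (s i * z.1) < ℓ z.1 := by omega
      simp [letterDefect, hS, hsz, hlen, hlt, lt_asymm hlt, hb.down i z hmin hlt]

theorem IsSphericalAction.prod_ofFn_apply_one (hb : IsSphericalAction cs A mx b) {m : ℕ}
    (w : Fin m → B) :
    (List.ofFn fun t => b (w t)).prod (mx ⟨1, isMinRep_one cs A⟩) =
      ∑ e : Fin m → Bool,
        (T (pdf cs A w e) : R[T;T⁻¹]) • mx (minRep cs A (suffixProd cs w e 0)) := by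
  induction m with
  | zero => simp [suffixProd, pdf, minRep_one]
  | succ m ih =>
    have ih' : (List.ofFn fun t => b (w t.succ)).prod (mx ⟨1, isMinRep_one cs A⟩) = _ :=
      ih (Fin.tail w)
    rw [List.ofFn_succ, List.prod_cons, Module.End.mul_apply, ih', map_sum,
      ← (Fin.consEquiv fun _ => Bool).sum_comp, Fintype.sum_prod_type_right]
    refine Finset.sum_congr rfl fun e _ => ?_
    simp only [Fin.consEquiv, Equiv.coe_fn_mk, Fintype.sum_bool, pdf_cons, suffixProd_cons_zero,
      map_smul, hb.apply_minRep, smul_add, smul_smul, ← T_add, if_true, if_false, one_mul,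
      Bool.false_eq_true]
    rw [add_comm (pdf cs A _ e), add_comm (pdf cs A _ e)]

end SphericalModule

theorem deodhar_formula_general {H Msp : Type*} [Ring H] [AddCommGroup Msp]
    [Algebra (LaurentPolynomial ℤ) H] [Module (LaurentPolynomial ℤ) Msp]
    (cs : CoxeterSystem M W) (A : Set B)
    (h : Module.Basis W (LaurentPolynomial ℤ) H)
    (msp : Module.Basis {x : W // IsMinRep cs A x} (LaurentPolynomial ℤ) Msp)
    (act : H →ₐ[LaurentPolynomial ℤ] Module.End (LaurentPolynomial ℤ) Msp)
    (act_U : ∀ (i : B) (x : {x : W // IsMinRep cs A x})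
      (hm : IsMinRep cs A (cs.simple i * x.1)),
      cs.length x.1 < cs.length (cs.simple i * x.1) →
      act (h (cs.simple i) + (T 1 : LaurentPolynomial ℤ) • h 1) (msp x) =
        msp ⟨cs.simple i * x.1, hm⟩ + (T 1 : LaurentPolynomial ℤ) • msp x)
    (act_D : ∀ (i : B) (x : {x : W // IsMinRep cs A x})
      (hm : IsMinRep cs A (cs.simple i * x.1)),
      cs.length (cs.simple i * x.1) < cs.length x.1 →
      act (h (cs.simple i) + (T 1 : LaurentPolynomial ℤ) • h 1) (msp x) =
        msp ⟨cs.simple i * x.1, hm⟩ + (T (-1) : LaurentPolynomial ℤ) • msp x)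
    (act_S : ∀ (i : B) (x : {x : W // IsMinRep cs A x}),
      x.1⁻¹ * cs.simple i * x.1 ∈ parabolic cs A →
      act (h (cs.simple i) + (T 1 : LaurentPolynomial ℤ) • h 1) (msp x) =
        ((T 1 : LaurentPolynomial ℤ) + T (-1)) • msp x)
    (m : ℕ) (w : Fin m → B) :
    act ((List.ofFn fun t : Fin m =>
        h (cs.simple (w t)) + (T 1 : LaurentPolynomial ℤ) • h 1).prod)
      (msp ⟨1, isMinRep_one cs A⟩) =
    ∑ e : Fin m → Bool,
      (T (pdf cs A w e) : LaurentPolynomial ℤ) • msp (minRep cs A (suffixProd cs w e 0)) := by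
  have hb : IsSphericalAction cs A msp fun i => act (h (cs.simple i) + (T 1 : ℤ[T;T⁻¹]) • h 1) :=
    ⟨act_U, act_D, act_S⟩
  rw [map_list_prod, List.map_ofFn]
  exact hb.prod_ofFn_apply_one w

/-- (Deodhar's formula in the spherical module.)  Let `(W, S)` be a
Coxeter system, `A ⊆ S`, and `W^A` the minimal length coset representatives of `W/W_A`.
Let `H` be the Hecke algebra over `R = ℤ[v,v⁻¹]` and `M` the spherical left `H`-module
with standard basis `{m_x : x ∈ W^A}` and action (via `act`) as in the paper:
`b_s·m_x = m_{sx} + v·m_x` (resp. `m_{sx} + v⁻¹·m_x`, resp. `(v+v⁻¹)·m_x`) when `sx > x`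
(resp. `sx < x`, resp. `sx = x`) in `W/W_A`.  Then for any expression
`x̲ = (s_{w 0}, …, s_{w (m-1)})`,
`m_{x̲} := b_{s_{w 0}} ⋯ b_{s_{w (m-1)}} · m_1 = Σ_{e̲ ⊆ x̲} v^{pdf(e̲)} m_{x̲^{e̲}}`,
the sum running over all `2^m` subexpressions, `x̲^{e̲}` being taken as the minimal
representative of its coset in `W/W_A`. -/
theorem deodhar_formula {H Msp : Type*} [Ring H] [AddCommGroup Msp]
    [Algebra (LaurentPolynomial ℤ) H] [Module (LaurentPolynomial ℤ) Msp]
    (cs : CoxeterSystem M W) (A : Set B)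
    (h : Module.Basis W (LaurentPolynomial ℤ) H)
    (h_one : h 1 = 1)
    (h_mul_lt : ∀ (i : B) (x : W), cs.length (cs.simple i * x) > cs.length x →
      h (cs.simple i) * h x = h (cs.simple i * x))
    (h_mul_gt : ∀ (i : B) (x : W), cs.length (cs.simple i * x) < cs.length x →
      h (cs.simple i) * h x = h (cs.simple i * x) +
        (((T (-1) : LaurentPolynomial ℤ)) - T 1) • h x)
    (msp : Module.Basis {x : W // IsMinRep cs A x} (LaurentPolynomial ℤ) Msp)
    (act : H →ₐ[LaurentPolynomial ℤ] Module.End (LaurentPolynomial ℤ) Msp)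
    (act_U : ∀ (i : B) (x : {x : W // IsMinRep cs A x})
      (hm : IsMinRep cs A (cs.simple i * x.1)),
      cs.length x.1 < cs.length (cs.simple i * x.1) →
      act (h (cs.simple i) + (T 1 : LaurentPolynomial ℤ) • h 1) (msp x) =
        msp ⟨cs.simple i * x.1, hm⟩ + (T 1 : LaurentPolynomial ℤ) • msp x)
    (act_D : ∀ (i : B) (x : {x : W // IsMinRep cs A x})
      (hm : IsMinRep cs A (cs.simple i * x.1)),
      cs.length (cs.simple i * x.1) < cs.length x.1 →
      act (h (cs.simple i) + (T 1 : LaurentPolynomial ℤ) • h 1) (msp x) =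
        msp ⟨cs.simple i * x.1, hm⟩ + (T (-1) : LaurentPolynomial ℤ) • msp x)
    (act_S : ∀ (i : B) (x : {x : W // IsMinRep cs A x}),
      x.1⁻¹ * cs.simple i * x.1 ∈ parabolic cs A →
      act (h (cs.simple i) + (T 1 : LaurentPolynomial ℤ) • h 1) (msp x) =
        ((T 1 : LaurentPolynomial ℤ) + T (-1)) • msp x)
    (m : ℕ) (w : Fin m → B) :
    act ((List.ofFn fun t : Fin m =>
        h (cs.simple (w t)) + (T 1 : LaurentPolynomial ℤ) • h 1).prod)
      (msp ⟨1, isMinRep_one cs A⟩) =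
    ∑ e : Fin m → Bool,
      (T (pdf cs A w e) : LaurentPolynomial ℤ) • msp (minRep cs A (suffixProd cs w e 0)) :=
  deodhar_formula_general cs A h msp act act_U act_D act_S m w
end

section
/- In a k-linear Krull–Schmidt category with finite-dimensional Hom spaces over a field k, the multiplicity of an indecomposable object X as a direct summand of an object Y equals the rank of the canonical pairing Hom(X,Y) × Hom(Y,X) → End(X)/rad End(X) ≅ k, when End(X)/rad End(X) ≅ k. -/
open CategoryTheory CategoryTheory.Limits

/-- The pairing `Hom(X,Y) × Hom(Y,X) → k`, `(f, g) ↦ χ(g ∘ f)`, induced by a linear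
functional `χ` on `End(X)` (thought of as the projection `End(X) → End(X)/rad ≅ k`),
as a linear map `Hom(X,Y) →ₗ (Hom(Y,X) →ₗ k)`. -/
def intersectionPairing {k : Type*} [Field k] {C : Type*} [Category C] [Preadditive C]
    [Linear k C] (X Y : C) (χ : (X ⟶ X) →ₗ[k] k) :
    (X ⟶ Y) →ₗ[k] (Y ⟶ X) →ₗ[k] k :=
  LinearMap.mk₂ k (fun f g => χ (f ≫ g))
    (fun f f' g => by simp [Preadditive.add_comp])
    (fun c f g => by simp [Linear.smul_comp])
    (fun f g g' => by simp [Preadditive.comp_add])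
    (fun c f g => by simp [Linear.comp_smul])

/-- Let `C` be a `k`-linear additive Krull–Schmidt category (idempotent
complete, with finite-dimensional Hom spaces over the field `k`).  Let `X` be an
indecomposable object such that `End(X)/rad(End(X)) ≅ k`; concretely, let
`χ : End(X) → k` be a `k`-linear map with `χ(𝟙) = 1` whose kernel is exactly the
Jacobson radical of `End(X)`.  Then for any object `Y`, the multiplicity of `X` as a
direct summand of `Y` — i.e. the `m` in any decomposition `Y ≅ X^{⊕m} ⊕ Z` with `X` not
a direct summand (retract) of `Z` — equals the rank of the pairing
`Hom(X,Y) × Hom(Y,X) → End(X)/rad End(X) ≅ k`, `(f,g) ↦ χ(g ∘ f)`. -/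
theorem multiplicity_eq_rank_intersection_form {k : Type*} [Field k]
    {C : Type*} [Category C] [Preadditive C] [Linear k C]
    [HasFiniteBiproducts C] [HasBinaryBiproducts C] [IsIdempotentComplete C]
    [∀ X Y : C, FiniteDimensional k (X ⟶ Y)]
    (X : C) (hX : Indecomposable X)
    (χ : (X ⟶ X) →ₗ[k] k) (hχ_one : χ (𝟙 X) = 1)
    (hχ_ker : ∀ f : End X, χ f = 0 ↔ f ∈ (⊥ : Ideal (End X)).jacobson)
    (Y : C) (m : ℕ) (Z : C) (e : Y ≅ (⨁ fun _ : Fin m => X) ⊞ Z)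
    (hZ : ¬ ∃ (i : X ⟶ Z) (p : Z ⟶ X), i ≫ p = 𝟙 X) :
    Module.finrank k (LinearMap.range (intersectionPairing X Y χ)) = m := by
  set J : Ideal (End X) := (⊥ : Ideal (End X)).jacobson with hJ
  set P := intersectionPairing X Y χ with hP
  have hPapp : ∀ (f : X ⟶ Y) (g : Y ⟶ X), P f g = χ (f ≫ g) := fun f g => rfl
  set ι : Fin m → (X ⟶ Y) :=
    fun j => biproduct.ι (fun _ : Fin m => X) j ≫ biprod.inl ≫ e.inv with hι
  set p : Fin m → (Y ⟶ X) :=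
    fun j => e.hom ≫ biprod.fst ≫ biproduct.π (fun _ : Fin m => X) j with hp
  -- orthogonality
  have horth : ∀ i j : Fin m, χ (ι i ≫ p j) = if i = j then 1 else 0 := by
    intro i j
    rcases eq_or_ne i j with h | h
    · subst h
      have h0 : ι i ≫ p i = 𝟙 X := by simp [hι, hp]
      rw [h0, hχ_one, if_pos rfl]
    · have h0 : ι i ≫ p j = 0 := by simp [hι, hp, biproduct.ι_π_ne _ h]
      rw [h0, map_zero, if_neg h]
  -- compositions through Z are in the radical
  have hZJ : ∀ (b : X ⟶ Z) (d : Z ⟶ X), (b ≫ d : X ⟶ X) ∈ J := by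
    intro b d
    by_contra h
    have hc : χ (b ≫ d) ≠ 0 := fun h0 => h ((hχ_ker _).1 h0)
    set d' : Z ⟶ X := (χ (b ≫ d))⁻¹ • d with hd'
    have h1' : χ (b ≫ d' - 𝟙 X) = 0 := by
      rw [map_sub, hd', Linear.comp_smul, map_smul, hχ_one, smul_eq_mul,
        inv_mul_cancel₀ hc, sub_self]
    have h1 : (b ≫ d' - 𝟙 X : X ⟶ X) ∈ J := (hχ_ker _).1 h1'
    obtain ⟨s, hs⟩ := Ideal.exists_mul_sub_mem_of_sub_one_mem_jacobson (R := End X) (b ≫ d') h1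
    rw [Ideal.mem_bot, sub_eq_zero] at hs
    have hs' : b ≫ d' ≫ s = 𝟙 X := by
      rw [← Category.assoc]; exact hs
    exact hZ ⟨b, d' ≫ s, hs'⟩
  -- key identity
  have key : ∀ (f : X ⟶ Y) (g : Y ⟶ X),
      χ (f ≫ g) = ∑ j, χ (f ≫ p j) * χ (ι j ≫ g) := by
    intro f g
    set f' : X ⟶ Y := f - ∑ j, χ (f ≫ p j) • ι j with hf'
    have hf'p : ∀ j, χ (f' ≫ p j) = 0 := by
      intro j
      rw [hf', Preadditive.sub_comp, Preadditive.sum_comp, map_sub, map_sum]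
      simp [Linear.smul_comp, horth, mul_ite]
    have hdecomp : f' ≫ g =
        (∑ j, (f' ≫ p j) ≫ (ι j ≫ g)) +
          (f' ≫ e.hom ≫ biprod.snd) ≫ (biprod.inr ≫ e.inv ≫ g) := by
      have h2 : (𝟙 ((⨁ fun _ : Fin m => X) ⊞ Z)) =
          biprod.fst ≫ (∑ j, biproduct.π (fun _ : Fin m => X) j ≫
            biproduct.ι (fun _ : Fin m => X) j) ≫ biprod.inl + biprod.snd ≫ biprod.inr := by
        rw [biproduct.total, Category.id_comp, biprod.total]
      have h3 : f' ≫ g = f' ≫ e.hom ≫ 𝟙 _ ≫ e.inv ≫ g := by simp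
      rw [h3, h2]
      simp only [Preadditive.add_comp, Preadditive.comp_add, Preadditive.sum_comp,
        Preadditive.comp_sum, Category.assoc, hp, hι]
    have hJ' : ((f' ≫ g : X ⟶ X) : End X) ∈ J := by
      rw [hdecomp]
      refine J.add_mem (Ideal.sum_mem _ fun j _ => ?_) (hZJ _ _)
      have hmem : ((f' ≫ p j : X ⟶ X) : End X) ∈ J := (hχ_ker _).1 (hf'p j)
      exact J.mul_mem_left (ι j ≫ g) hmem
    have hχ0 : χ (f' ≫ g) = 0 := (hχ_ker _).2 hJ'
    have hfg : f ≫ g = f' ≫ g + ∑ j, χ (f ≫ p j) • (ι j ≫ g) := by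
      rw [hf', Preadditive.sub_comp, Preadditive.sum_comp]
      simp [Linear.smul_comp]
    rw [hfg, map_add, hχ0, zero_add, map_sum]
    simp [smul_eq_mul]
  -- range is spanned by the P (ι j)
  have hrange : LinearMap.range P = Submodule.span k (Set.range fun j => P (ι j)) := by
    apply le_antisymm
    · rintro _ ⟨f, rfl⟩
      have hPf : P f = ∑ j, χ (f ≫ p j) • P (ι j) := by
        ext g
        rw [hPapp, key f g]
        simp [hPapp, smul_eq_mul]
      rw [hPf]
      exact Submodule.sum_mem _ fun j _ =>
        Submodule.smul_mem _ _ (Submodule.subset_span ⟨j, rfl⟩)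
    · rw [Submodule.span_le]
      rintro _ ⟨j, rfl⟩
      exact ⟨ι j, rfl⟩
  have hli : LinearIndependent k fun j => P (ι j) := by
    rw [Fintype.linearIndependent_iff]
    intro c hc j
    have hcj := LinearMap.congr_fun hc (p j)
    simpa [hPapp, horth, mul_ite] using hcj
  rw [hrange, finrank_span_eq_card hli, Fintype.card_fin]
end
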